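/- arXiv:2312.13865 — 12 statements merged into one kernel-verified Lean document; each statement's English description precedes it below -/
import Mathlib

section
/- Let K be an algebraically closed field and A, B ∈ M(2,K) with A - B invertible. Then the map (X,Y) ↦ AXY - BYX from M(2,K) × M(2,K) to M(2,K) is surjective. -/
theorem stmt0 (K : Type*) [Field K] [IsAlgClosed K]
    (A B : Matrix (Fin 2) (Fin 2) K) (h : (A - B).det ≠ 0) :
    Function.Surjective (fun XY : Matrix (Fin 2) (Fin 2) K × Matrix (Fin 2) (Fin 2) K =>
      A * XY.1 * XY.2 - B * XY.2 * XY.1) := by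
  intro C
  have hu : IsUnit (A - B) := (Matrix.isUnit_iff_isUnit_det _).2 (isUnit_iff_ne_zero.2 h)
  refine ⟨((A - B)⁻¹ * C, 1), ?_⟩
  simp only [mul_one, one_mul]
  rw [← sub_mul, ← mul_assoc, Matrix.mul_nonsing_inv _ (isUnit_iff_ne_zero.2 h), one_mul]
end

section
/- Let K be a field and A ∈ M(2,K) any matrix. Then the image of the map (X,Y) ↦ AXY - AYX on M(2,K) equals A · sl(2,K), the set of all matrices of the form A·M where M has trace zero. -/
lemma comm_of_trace_zero (K : Type*) [Field K] (M : Matrix (Fin 2) (Fin 2) K)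
    (ht : M.trace = 0) : ∃ X Y : Matrix (Fin 2) (Fin 2) K, M = X * Y - Y * X := by
  have h2 : M 1 1 = -M 0 0 := by
    simp [Matrix.trace, Fin.sum_univ_two, Matrix.diag] at ht
    linear_combination ht
  by_cases h : M 0 1 = 0
  · refine ⟨!![0,0;1,0], !![M 1 0, -M 0 0; 0, 0], ?_⟩
    ext i j
    fin_cases i <;> fin_cases j <;>
      simp [Matrix.mul_apply, Fin.sum_univ_two, h, h2]
  · refine ⟨!![0,1; -(M 1 0) / M 0 1, 0], !![0,0; M 0 0, M 0 1], ?_⟩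
    ext i j
    fin_cases i <;> fin_cases j <;>
      simp [Matrix.mul_apply, Fin.sum_univ_two, h2] <;>
      field_simp

theorem stmt1 (K : Type*) [Field K] (A : Matrix (Fin 2) (Fin 2) K) :
    {C | ∃ X Y : Matrix (Fin 2) (Fin 2) K, C = A * X * Y - A * Y * X}
      = {C | ∃ M : Matrix (Fin 2) (Fin 2) K, M.trace = 0 ∧ C = A * M} := by
  ext C
  simp only [Set.mem_setOf_eq]
  constructor
  · rintro ⟨X, Y, rfl⟩
    refine ⟨X * Y - Y * X, ?_, by noncomm_ring⟩
    simp [Matrix.trace_mul_comm X Y]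
  · rintro ⟨M, ht, rfl⟩
    obtain ⟨X, Y, rfl⟩ := comm_of_trace_zero K M ht
    exact ⟨X, Y, by noncomm_ring⟩
end

section
/- Let K be an algebraically closed field, k₁, k₂ positive integers, and λ, μ ∈ K both nonzero. Then the map (X,Y) ↦ λX^{k₁} + μY^{k₂} on M(2,K) is surjective. -/
open Matrix Polynomial

private lemma ch2 {K : Type*} [CommRing K] (M : Matrix (Fin 2) (Fin 2) K) :
    M * M = Matrix.trace M • M - Matrix.det M • (1 : Matrix (Fin 2) (Fin 2) K) := by
  ext i j
  fin_cases i <;> fin_cases j <;>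
    simp [Matrix.mul_apply, Fin.sum_univ_two, Matrix.trace_fin_two, Matrix.det_fin_two,
      Matrix.one_apply] <;> ring

private lemma key {K : Type*} [Field K] [IsAlgClosed K] {k : ℕ} (hk : 0 < k) {m : K}
    (hm : m ≠ 0) (M : Matrix (Fin 2) (Fin 2) K)
    (hdisc : (Matrix.trace M) ^ 2 - 4 * Matrix.det M ≠ 0) :
    ∃ Y : Matrix (Fin 2) (Fin 2) K, m • Y ^ k = M := by
  obtain ⟨α, hα⟩ := IsAlgClosed.exists_root
    (p := X ^ 2 - C (Matrix.trace M) * X + C (Matrix.det M)) (by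
      have : (X ^ 2 - C (Matrix.trace M) * X + C (Matrix.det M) : K[X]).degree = 2 := by
        compute_degree!
      simp [this])
  have hα' : α ^ 2 - Matrix.trace M * α + Matrix.det M = 0 := by
    simpa using hα
  obtain ⟨β, hsum, hprod⟩ : ∃ β : K, Matrix.trace M = α + β ∧ Matrix.det M = α * β :=
    ⟨Matrix.trace M - α, by ring, by linear_combination hα'⟩
  have hne : α - β ≠ 0 := by
    intro h
    apply hdisc
    rw [hsum, hprod]
    linear_combination (α - β) * h
  obtain ⟨e, he⟩ : ∃ e : K, e * (α - β) = 1 := ⟨(α - β)⁻¹, inv_mul_cancel₀ hne⟩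
  have hM2 : M * M = (α + β) • M - (α * β) • (1 : Matrix (Fin 2) (Fin 2) K) := by
    rw [ch2, hsum, hprod]
  have expand : ∀ a b c d : K,
      (a • M + b • (1 : Matrix (Fin 2) (Fin 2) K)) * (c • M + d • 1) =
        (a * c * (α + β) + (a * d + b * c)) • M + (b * d - a * c * (α * β)) • 1 := by
    intro a b c d
    simp only [mul_add, add_mul, smul_mul_assoc, mul_smul_comm, smul_smul, mul_one, one_mul, hM2]
    module
  have hmul : ∀ u v u' v' : K,
      ((e * (u - v)) • M + (e * (v * α - u * β)) • (1 : Matrix (Fin 2) (Fin 2) K)) *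
        ((e * (u' - v')) • M + (e * (v' * α - u' * β)) • 1) =
      (e * (u * u' - v * v')) • M + (e * (v * v' * α - u * u' * β)) • 1 := by
    intro u v u' v'
    rw [expand]
    match_scalars
    · linear_combination (e * (u * u' - v * v')) * he
    · linear_combination (e * (v * v' * α - u * u' * β)) * he
  have hpow : ∀ (n : ℕ) (u v : K),
      ((e * (u - v)) • M + (e * (v * α - u * β)) • (1 : Matrix (Fin 2) (Fin 2) K)) ^ n =
        (e * (u ^ n - v ^ n)) • M + (e * (v ^ n * α - u ^ n * β)) • 1 := by
    intro n
    induction n with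
    | zero =>
      intro u v
      simp only [pow_zero]
      have h1 : e * ((1:K) - 1) = 0 := by ring
      have h2 : e * ((1:K) * α - 1 * β) = 1 := by linear_combination he
      rw [h1, h2, zero_smul, one_smul, zero_add]
    | succ n ih =>
      intro u v
      rw [pow_succ, ih, hmul]
      match_scalars <;> ring
  obtain ⟨s, hs⟩ := IsAlgClosed.exists_pow_nat_eq (α * m⁻¹) hk
  obtain ⟨t, ht⟩ := IsAlgClosed.exists_pow_nat_eq (β * m⁻¹) hk
  refine ⟨(e * (s - t)) • M + (e * (t * α - s * β)) • 1, ?_⟩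
  rw [hpow k s t, hs, ht, smul_add, smul_smul, smul_smul]
  have h1 : m * (e * (α * m⁻¹ - β * m⁻¹)) = 1 := by
    have hmm : m * m⁻¹ = 1 := mul_inv_cancel₀ hm
    linear_combination (m * m⁻¹) * he + hmm
  have h2 : m * (e * (β * m⁻¹ * α - α * m⁻¹ * β)) = 0 := by
    have : β * m⁻¹ * α - α * m⁻¹ * β = 0 := by ring
    rw [this, mul_zero, mul_zero]
  rw [h1, h2, zero_smul, one_smul, add_zero]

theorem stmt5 (K : Type*) [Field K] [IsAlgClosed K] (k₁ k₂ : ℕ)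
    (hk₁ : 0 < k₁) (hk₂ : 0 < k₂) (l m : K) (hl : l ≠ 0) (hm : m ≠ 0) :
    Function.Surjective (fun XY : Matrix (Fin 2) (Fin 2) K × Matrix (Fin 2) (Fin 2) K =>
      l • XY.1 ^ k₁ + m • XY.2 ^ k₂) := by
  classical
  intro A
  have hu : ∃ u : K,
      (A 0 0 + A 1 1 - u) ^ 2 - 4 * ((A 0 0 - u) * A 1 1 - A 0 1 * A 1 0) ≠ 0 := by
    by_contra hno
    push_neg at hno
    obtain ⟨u₂, hu₂⟩ := Infinite.exists_notMem_finset ({0} : Finset K)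
    obtain ⟨u₃, hu₃⟩ := Infinite.exists_notMem_finset ({0, u₂} : Finset K)
    simp only [Finset.mem_insert, Finset.mem_singleton, not_or] at hu₂ hu₃
    have h12 : ((0:K) - u₂) * (0 + u₂ + 2 * (A 1 1 - A 0 0)) = 0 := by
      linear_combination hno 0 - hno u₂
    have h13 : ((0:K) - u₃) * (0 + u₃ + 2 * (A 1 1 - A 0 0)) = 0 := by
      linear_combination hno 0 - hno u₃
    have e2 : (0:K) + u₂ + 2 * (A 1 1 - A 0 0) = 0 :=
      (mul_eq_zero.mp h12).resolve_left (by simpa using hu₂)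
    have e3 : (0:K) + u₃ + 2 * (A 1 1 - A 0 0) = 0 :=
      (mul_eq_zero.mp h13).resolve_left (by simpa using hu₃.1)
    exact hu₃.2 (by linear_combination e3 - e2)
  obtain ⟨u, hu⟩ := hu
  obtain ⟨x, hx⟩ := IsAlgClosed.exists_pow_nat_eq (u * l⁻¹) hk₁
  have hX : l • (Matrix.diagonal ![x, 0] : Matrix (Fin 2) (Fin 2) K) ^ k₁ =
      Matrix.diagonal ![u, 0] := by
    rw [Matrix.diagonal_pow]
    ext i j
    fin_cases i <;> fin_cases j <;>
      simp [Matrix.diagonal_apply, Pi.pow_apply, zero_pow hk₁.ne', hx] <;>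
      field_simp
  set M := A - Matrix.diagonal ![u, 0] with hMdef
  have htr : Matrix.trace M = A 0 0 + A 1 1 - u := by
    simp [hMdef, Matrix.trace_fin_two, Matrix.sub_apply, Matrix.diagonal_apply]
    try ring
  have hdet : Matrix.det M = (A 0 0 - u) * A 1 1 - A 0 1 * A 1 0 := by
    simp [hMdef, Matrix.det_fin_two, Matrix.sub_apply, Matrix.diagonal_apply]
    try ring
  obtain ⟨Y, hY⟩ := key hk₂ hm M (by rw [htr, hdet]; exact hu)
  refine ⟨⟨Matrix.diagonal ![x, 0], Y⟩, ?_⟩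
  simp only [hX, hY, hMdef]
  abel
end

section
/- Let K be an algebraically closed field, k₁, k₂ positive integers, A = diag(λ,0) with λ ≠ 0, and B = diag(ξ,0) with ξ arbitrary. Then every matrix of the form [[a,b],[0,0]] lies in the image of the map (X,Y) ↦ AX^{k₁} + BY^{k₂} on M(2,K). -/
/-! A matrix `M` with zero second row satisfies `diag(1,0) * M = M`, so it suffices to realise
the first row `(c, d)` of `(a - ξ, b) / l` as the first row of a `k₁`-th power (take `Y = 1`).
For `c ≠ 0` use `[[x, y], [0, 0]]` with `x ^ k₁ = c`, whose powers are `[[x ^ n, x ^ (n-1) y], [0, 0]]`;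
for `c = 0` use the idempotent `[[0, d], [0, 1]]`. -/

namespace Matrix

variable {K : Type*} [Field K]

lemma upperRow_pow_succ (x y : K) (n : ℕ) :
    !![x, y; 0, 0] ^ (n + 1) = !![x ^ (n + 1), x ^ n * y; 0, 0] := by
  induction n with
  | zero => simp
  | succ n ih =>
    rw [pow_succ, ih, mul_fin_two]
    ring_nf

lemma isIdempotentElem_zero_one (d : K) : IsIdempotentElem !![0, d; 0, 1] := by
  simp [IsIdempotentElem]

lemma exists_firstRow_pow_eq [IsAlgClosed K] {k : ℕ} (hk : k ≠ 0) (c d : K) :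
    ∃ X : Matrix (Fin 2) (Fin 2) K, !![1, 0; 0, 0] * X ^ k = !![c, d; 0, 0] := by
  by_cases hc : c = 0
  · refine ⟨!![0, d; 0, 1], ?_⟩
    rw [(isIdempotentElem_zero_one d).pow_eq hk, mul_fin_two, hc]
    simp
  · obtain ⟨n, rfl⟩ := Nat.exists_eq_add_one_of_ne_zero hk
    obtain ⟨x, hx⟩ := IsAlgClosed.exists_pow_nat_eq c hk.bot_lt
    have hx0 : x ^ n ≠ 0 := pow_ne_zero n (ne_zero_pow hk (hx ▸ hc))
    refine ⟨!![x, d / x ^ n; 0, 0], ?_⟩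
    rw [upperRow_pow_succ, hx, mul_div_cancel₀ d hx0, mul_fin_two]
    simp

end Matrix

theorem stmt7_general (K : Type*) [Field K] [IsAlgClosed K] (k₁ k₂ : ℕ)
    (hk₁ : 0 < k₁) (l ξ : K) (hl : l ≠ 0) :
    ∀ a b : K, ∃ X Y : Matrix (Fin 2) (Fin 2) K,
      !![a, b; 0, 0] = !![l, 0; 0, 0] * X ^ k₁ + !![ξ, 0; 0, 0] * Y ^ k₂ := by
  intro a b
  obtain ⟨X, hX⟩ := Matrix.exists_firstRow_pow_eq hk₁.ne' ((a - ξ) / l) (b / l)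
  have hdiag : !![l, 0; 0, 0] = l • !![(1 : K), 0; 0, 0] := by simp
  refine ⟨X, 1, ?_⟩
  rw [one_pow, Matrix.mul_one, hdiag, Matrix.smul_mul, hX]
  ext i j
  fin_cases i <;> fin_cases j <;> simp [mul_div_cancel₀ _ hl]

theorem stmt7 (K : Type*) [Field K] [IsAlgClosed K] (k₁ k₂ : ℕ)
    (hk₁ : 0 < k₁) (hk₂ : 0 < k₂) (l ξ : K) (hl : l ≠ 0) :
    ∀ a b : K, ∃ X Y : Matrix (Fin 2) (Fin 2) K,
      !![a, b; 0, 0] = !![l, 0; 0, 0] * X ^ k₁ + !![ξ, 0; 0, 0] * Y ^ k₂ :=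
  stmt7_general K k₁ k₂ hk₁ l ξ hl
end

section
/- Let K be an algebraically closed field, k₁, k₂ positive integers, A = diag(λ,μ) an invertible diagonal matrix, and B = diag(ξ₁,ξ₂) an invertible diagonal matrix. Then the map (X,Y) ↦ AX^{k₁} + BY^{k₂} on M(2,K) is surjective. -/
/-!
Split the target `C` as `A P + B Q` with `P` lower triangular with `P 0 0 = 0` and `Q` upper
triangular. The entry `r = P 1 1` is free; it is chosen nonzero and such that the diagonal
entries of `Q` differ. Over an algebraically closed field a triangular `2 × 2` matrix with
distinct diagonal entries is a `k`-th power for every `k > 0`: take `k`-th roots of the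
diagonal and solve for the off-diagonal entry, using the closed formula for powers.
-/

namespace Matrix

variable {K : Type*} [Field K]

theorem upperTriangular_fin_two_pow {a b c : K} (hac : a ≠ c) (n : ℕ) :
    !![a, b; 0, c] ^ n = !![a ^ n, b * (a ^ n - c ^ n) / (a - c); 0, c ^ n] := by
  have hac' : a - c ≠ 0 := sub_ne_zero.mpr hac
  induction n with
  | zero => simp [one_fin_two]
  | succ n ih =>
    rw [pow_succ, ih, mul_fin_two]
    ext i j
    fin_cases i <;> fin_cases j <;> simp <;> field_simp <;> ring

theorem exists_pow_eq_upperTriangular_fin_two [IsAlgClosed K] {n : ℕ} (hn : 0 < n)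
    {a c : K} (hac : a ≠ c) (b : K) : ∃ Y : Matrix (Fin 2) (Fin 2) K, Y ^ n = !![a, b; 0, c] := by
  obtain ⟨δ, rfl⟩ := IsAlgClosed.exists_pow_nat_eq a hn
  obtain ⟨ε, rfl⟩ := IsAlgClosed.exists_pow_nat_eq c hn
  have hδε : δ ≠ ε := by rintro rfl; exact hac rfl
  refine ⟨!![δ, b * (δ - ε) / (δ ^ n - ε ^ n); 0, ε], ?_⟩
  rw [upperTriangular_fin_two_pow hδε]
  have h1 : δ - ε ≠ 0 := sub_ne_zero.mpr hδε
  have h2 : δ ^ n - ε ^ n ≠ 0 := sub_ne_zero.mpr hac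
  ext i j
  fin_cases i <;> fin_cases j <;> simp [field]

theorem exists_pow_eq_lowerTriangular_fin_two [IsAlgClosed K] {n : ℕ} (hn : 0 < n)
    {a c : K} (hac : a ≠ c) (b : K) : ∃ X : Matrix (Fin 2) (Fin 2) K, X ^ n = !![a, 0; b, c] := by
  obtain ⟨Y, hY⟩ := exists_pow_eq_upperTriangular_fin_two hn hac b
  refine ⟨Yᵀ, ?_⟩
  rw [← transpose_pow, hY]
  ext i j; fin_cases i <;> fin_cases j <;> rfl

end Matrix

open Matrix in
theorem stmt8 (K : Type*) [Field K] [IsAlgClosed K] (k₁ k₂ : ℕ)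
    (hk₁ : 0 < k₁) (hk₂ : 0 < k₂) (l m ξ₁ ξ₂ : K)
    (hA : l * m ≠ 0) (hB : ξ₁ * ξ₂ ≠ 0) :
    Function.Surjective (fun XY : Matrix (Fin 2) (Fin 2) K × Matrix (Fin 2) (Fin 2) K =>
      !![l, 0; 0, m] * XY.1 ^ k₁ + !![ξ₁, 0; 0, ξ₂] * XY.2 ^ k₂) := by
  obtain ⟨-, hm⟩ := mul_ne_zero_iff.mp hA
  obtain ⟨hξ₁, hξ₂⟩ := mul_ne_zero_iff.mp hB
  intro C
  classical
  -- `r` becomes the entry `(X ^ k₁) 1 1`; the second excluded value would make `hdiag` fail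
  obtain ⟨r, hr⟩ := Infinite.exists_notMem_finset ({0, (C 1 1 - ξ₂ * (C 0 0 / ξ₁)) / m} : Finset K)
  simp only [Finset.mem_insert, Finset.mem_singleton, not_or] at hr
  have hdiag : C 0 0 / ξ₁ ≠ (C 1 1 - m * r) / ξ₂ := by
    intro h
    rw [div_eq_div_iff hξ₁ hξ₂] at h
    refine hr.2 ?_
    field_simp
    linear_combination h
  obtain ⟨X, hX⟩ := exists_pow_eq_lowerTriangular_fin_two hk₁ (Ne.symm hr.1) (C 1 0 / m)
  obtain ⟨Y, hY⟩ := exists_pow_eq_upperTriangular_fin_two hk₂ hdiag (C 0 1 / ξ₁)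
  refine ⟨(X, Y), ?_⟩
  ext i j
  fin_cases i <;> fin_cases j <;> simp [hX, hY, field]
end

section
/- Let K be an algebraically closed field, k₁, k₂ positive integers, A = diag(0,μ) with μ ∈ K, and B = [[0,0],[1,ξ]] with ξ ∈ K. Then the image of the map (X,Y) ↦ AX^{k₁} + BY^{k₂} on M(2,K) is exactly the set of matrices with zero first row. -/
/-!
Both coefficient matrices have zero first row, hence so does every value of the map. Conversely,
the second row of `B * Z` is `(1, ξ) ᵥ* Z`, and for any nonzero row vector `w` and positive `k`
every row vector is of the form `w ᵥ* Y ^ k`: take `Y = t • u vᵀ` with `v ⬝ᵥ u = 1`, a scaled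
idempotent, and `t` a `k`-th root of `(w ⬝ᵥ u)⁻¹`. So the `B`-term alone already reaches
everything, and the `A`-term can be fixed at `X = 1`.
-/

open Matrix

section

variable {K n : Type*} [Field K] [Fintype n]

lemma exists_dotProduct_eq_one_and_ne_zero [DecidableEq n] {v w : n → K} (hv : v ≠ 0)
    (hw : w ≠ 0) : ∃ u, v ⬝ᵥ u = 1 ∧ w ⬝ᵥ u ≠ 0 := by
  obtain ⟨i, hi⟩ := Function.ne_iff.mp hv
  obtain ⟨j, hj⟩ := Function.ne_iff.mp hw
  set u₀ : n → K := Pi.single i (v i)⁻¹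
  set u₁ : n → K := Pi.single j 1
  have hvu₀ : v ⬝ᵥ u₀ = 1 := by simp [u₀, dotProduct_single, mul_inv_cancel₀ hi]
  have hwu₁ : w ⬝ᵥ u₁ ≠ 0 := by simpa [u₁, dotProduct_single] using hj
  by_cases hwu₀ : w ⬝ᵥ u₀ = 0
  · -- move along `u₁`, corrected by a multiple of `u₀` to stay on the hyperplane `v ⬝ᵥ u = 1`
    refine ⟨u₀ + u₁ - (v ⬝ᵥ u₁) • u₀, ?_, ?_⟩
    · simp [dotProduct_add, dotProduct_sub, dotProduct_smul, hvu₀]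
    · simpa [dotProduct_add, dotProduct_sub, dotProduct_smul, hwu₀] using hwu₁
  · exact ⟨u₀, hvu₀, hwu₀⟩

lemma isIdempotentElem_vecMulVec {u v : n → K} (h : v ⬝ᵥ u = 1) :
    IsIdempotentElem (vecMulVec u v) := by
  simp [IsIdempotentElem, vecMulVec_mul_vecMulVec, h]

theorem exists_vecMul_pow_eq [IsAlgClosed K] [DecidableEq n] {w : n → K} (hw : w ≠ 0)
    {k : ℕ} (hk : 0 < k) (v : n → K) : ∃ Y : Matrix n n K, w ᵥ* Y ^ k = v := by
  rcases eq_or_ne v 0 with rfl | hv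
  · exact ⟨0, by simp [zero_pow hk.ne']⟩
  obtain ⟨u, hvu, hwu⟩ := exists_dotProduct_eq_one_and_ne_zero hv hw
  obtain ⟨t, ht⟩ := IsAlgClosed.exists_pow_nat_eq (w ⬝ᵥ u)⁻¹ hk
  refine ⟨t • vecMulVec u v, ?_⟩
  rw [smul_pow, (isIdempotentElem_vecMulVec hvu).pow_eq hk.ne', ht, vecMul_smul,
    vecMul_vecMulVec, smul_smul, inv_mul_cancel₀ hwu, one_smul]

end

theorem stmt9_general (K : Type*) [Field K] [IsAlgClosed K] (k₁ k₂ : ℕ)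
    (hk₂ : 0 < k₂) (μ ξ : K) :
    {C : Matrix (Fin 2) (Fin 2) K | ∃ X Y : Matrix (Fin 2) (Fin 2) K,
        C = !![(0 : K), 0; 0, μ] * X ^ k₁ + !![(0 : K), 0; 1, ξ] * Y ^ k₂}
      = {C : Matrix (Fin 2) (Fin 2) K | C 0 0 = 0 ∧ C 0 1 = 0} := by
  ext C
  constructor
  · rintro ⟨X, Y, rfl⟩
    simp [vecMul, dotProduct]
  · rintro ⟨h0, h1⟩
    obtain ⟨Y, hY⟩ := exists_vecMul_pow_eq (w := ![1, ξ]) (by simp) hk₂ (C 1 - ![0, μ])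
    refine ⟨1, Y, ?_⟩
    ext i j
    fin_cases i
    · fin_cases j <;> simp [vecMul, dotProduct, h0, h1]
    · have hYj := congrFun hY j
      fin_cases j <;> simp [vecMul, dotProduct] at hYj ⊢ <;> linear_combination -hYj

theorem stmt9 (K : Type*) [Field K] [IsAlgClosed K] (k₁ k₂ : ℕ)
    (hk₁ : 0 < k₁) (hk₂ : 0 < k₂) (μ ξ : K) :
    {C : Matrix (Fin 2) (Fin 2) K | ∃ X Y : Matrix (Fin 2) (Fin 2) K,
        C = !![(0 : K), 0; 0, μ] * X ^ k₁ + !![(0 : K), 0; 1, ξ] * Y ^ k₂}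
      = {C : Matrix (Fin 2) (Fin 2) K | C 0 0 = 0 ∧ C 0 1 = 0} :=
  stmt9_general K k₁ k₂ hk₂ μ ξ
end

section
/- Let K be an algebraically closed field with characteristic not 2, μ₁ ≠ μ₂ nonzero elements of K, A = diag(μ₁,μ₂), and B = [[0,μ₁μ₂],[1,0]]. Then the map (X,Y) ↦ AXY - BYX on M(2,K) is surjective. -/
theorem stmt10 (K : Type*) [Field K] [IsAlgClosed K] (hchar : (2 : K) ≠ 0)
    (μ₁ μ₂ : K) (h : μ₁ ≠ μ₂) (h1 : μ₁ ≠ 0) (h2 : μ₂ ≠ 0) :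
    Function.Surjective (fun XY : Matrix (Fin 2) (Fin 2) K × Matrix (Fin 2) (Fin 2) K =>
      !![μ₁, 0; 0, μ₂] * XY.1 * XY.2 - !![(0 : K), μ₁ * μ₂; 1, 0] * XY.2 * XY.1) := by
  intro C
  refine ⟨(!![1, 0; 0, 2],
    !![2 * C 0 0 / μ₁ + C 1 0, -(C 0 1 / μ₁ + C 1 1);
       (C 0 0 + μ₁ * C 1 0) / (μ₁ * μ₂), -(2 * C 0 1 + μ₁ * C 1 1) / (2 * μ₁ * μ₂)]), ?_⟩
  ext i j
  fin_cases i <;> fin_cases j <;>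
    simp [Matrix.mul_apply, Fin.sum_univ_two] <;> field_simp <;> ring
end

section
/- Let K be an algebraically closed field, μ ∈ K nonzero, A = diag(μ,μ), and B = [[μ,1],[0,μ]]. Then the map (X,Y) ↦ AXY - BYX on M(2,K) is surjective. -/
theorem stmt13 (K : Type*) [Field K] [IsAlgClosed K] (μ : K) (hμ : μ ≠ 0) :
    Function.Surjective (fun XY : Matrix (Fin 2) (Fin 2) K × Matrix (Fin 2) (Fin 2) K =>
      !![μ, 0; 0, μ] * XY.1 * XY.2 - !![μ, 1; 0, μ] * XY.2 * XY.1) := by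
  intro C
  refine ⟨(!![ -C 0 0 - C 1 1, -C 0 1 - C 1 0;
               -C 0 1 - C 1 0 + C 1 1 / μ, -C 0 0 - C 1 1 + C 1 0 / μ ],
           !![(0 : K), 1; 1, 0]), ?_⟩
  ext i j
  fin_cases i <;> fin_cases j <;>
    simp [Matrix.mul_apply, Fin.sum_univ_two] <;> field_simp <;> ring
end

section
/- Let K be an algebraically closed field, μ₁ ≠ μ₂ elements of K with μ₁ ≠ 0, A = diag(μ₁,μ₁), and B = diag(μ₁,μ₂). Then the map (X,Y) ↦ AXY - BYX on M(2,K) is surjective. -/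
theorem stmt14 (K : Type*) [Field K] [IsAlgClosed K] (μ₁ μ₂ : K)
    (h : μ₁ ≠ μ₂) (h1 : μ₁ ≠ 0) :
    Function.Surjective (fun XY : Matrix (Fin 2) (Fin 2) K × Matrix (Fin 2) (Fin 2) K =>
      !![μ₁, 0; 0, μ₁] * XY.1 * XY.2 - !![μ₁, 0; 0, μ₂] * XY.2 * XY.1) := by
  intro C
  have hd : μ₁ - μ₂ ≠ 0 := sub_ne_zero.mpr h
  refine ⟨⟨!![(C 0 1 + C 1 0)/(μ₁-μ₂), (C 0 0 + C 1 1)/(μ₁-μ₂);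
             (C 0 0 + C 1 1)/(μ₁-μ₂) - C 0 0/μ₁,
             (C 0 1 + C 1 0)/(μ₁-μ₂) - C 0 1/μ₁],
           !![0, 1; 1, 0]⟩, ?_⟩
  simp only
  ext i j
  fin_cases i <;> fin_cases j <;>
    simp [Matrix.mul_apply, Fin.sum_univ_succ] <;>
    field_simp <;> ring
end

section
/- Let K be an algebraically closed field, μ₂ ∈ K nonzero, A = diag(0,μ₂), and B = [[0,1],[0,0]]. Then the map (X,Y) ↦ AXY - BYX on M(2,K) is surjective. -/
theorem stmt15 (K : Type*) [Field K] [IsAlgClosed K] (μ₂ : K) (h : μ₂ ≠ 0) :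
    Function.Surjective (fun XY : Matrix (Fin 2) (Fin 2) K × Matrix (Fin 2) (Fin 2) K =>
      !![(0 : K), 0; 0, μ₂] * XY.1 * XY.2 - !![(0 : K), 1; 0, 0] * XY.2 * XY.1) := by
  intro C
  refine ⟨(!![(0 : K), -C 0 1; 1, 0], !![C 1 0 / μ₂, C 1 1 / μ₂; 1, -C 0 0]), ?_⟩
  ext i j
  fin_cases i <;> fin_cases j <;>
    simp [Matrix.mul_apply, Fin.sum_univ_two] <;> field_simp
end

section
/- Let K be an algebraically closed field, k₁, k₂ positive integers, A = [[0,1],[0,0]], and B = [[0,z],[0,0]] with z ∈ K. Then the image of the map (X,Y) ↦ AX^{k₁} + BY^{k₂} on M(2,K) is exactly the set of matrices with zero second row. -/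
open Matrix

lemma aux_pow_smul {K : Type*} [Field K] (X : Matrix (Fin 2) (Fin 2) K) (t : K)
    (h : X * X = t • X) : ∀ k, 0 < k → X ^ k = t ^ (k - 1) • X := by
  intro k hk
  induction k with
  | zero => omega
  | succ n ih =>
    rcases Nat.eq_zero_or_pos n with h0 | hn
    · subst h0; simp
    · rw [pow_succ, ih hn, smul_mul_assoc, h, smul_smul, ← pow_succ]
      have hn' : n - 1 + 1 = n + 1 - 1 := by omega
      rw [hn']

theorem stmt17 (K : Type*) [Field K] [IsAlgClosed K] (k₁ k₂ : ℕ)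
    (hk₁ : 0 < k₁) (hk₂ : 0 < k₂) (z : K) :
    {C : Matrix (Fin 2) (Fin 2) K | ∃ X Y : Matrix (Fin 2) (Fin 2) K,
        C = !![(0 : K), 1; 0, 0] * X ^ k₁ + !![(0 : K), z; 0, 0] * Y ^ k₂}
      = {C : Matrix (Fin 2) (Fin 2) K | C 1 0 = 0 ∧ C 1 1 = 0} := by
  ext C
  simp only [Set.mem_setOf_eq]
  constructor
  · rintro ⟨X, Y, rfl⟩
    constructor <;> simp [Matrix.add_apply, Matrix.mul_apply, Fin.sum_univ_two,
        Matrix.vecMul, dotProduct]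
  · rintro ⟨h10, h11⟩
    by_cases hb : C 0 1 = 0
    · refine ⟨!![1, 0; C 0 0, 0], 0, ?_⟩
      have hX : (!![1, 0; C 0 0, 0] : Matrix (Fin 2) (Fin 2) K) *
          !![1, 0; C 0 0, 0] = (1 : K) • !![1, 0; C 0 0, 0] := by
        ext i j; fin_cases i <;> fin_cases j <;>
          simp [Matrix.mul_apply, Fin.sum_univ_two]
      rw [aux_pow_smul _ _ hX k₁ hk₁, zero_pow hk₂.ne']
      ext i j; fin_cases i <;> fin_cases j <;>
        simp [Matrix.add_apply, Matrix.mul_apply, Fin.sum_univ_two, hb, h10, h11]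
    · obtain ⟨t, ht⟩ := IsAlgClosed.exists_pow_nat_eq (C 0 1) hk₁
      have htne : t ≠ 0 := by
        rintro rfl
        exact hb (by rw [← ht, zero_pow hk₁.ne'])
      have htpne : t ^ (k₁ - 1) ≠ 0 := pow_ne_zero _ htne
      refine ⟨!![0, 0; C 0 0 / t ^ (k₁ - 1), t], 0, ?_⟩
      have hX : (!![0, 0; C 0 0 / t ^ (k₁ - 1), t] : Matrix (Fin 2) (Fin 2) K) *
          !![0, 0; C 0 0 / t ^ (k₁ - 1), t] =
          t • !![0, 0; C 0 0 / t ^ (k₁ - 1), t] := by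
        ext i j; fin_cases i <;> fin_cases j <;>
          simp [Matrix.mul_apply, Fin.sum_univ_two, mul_comm]
      rw [aux_pow_smul _ _ hX k₁ hk₁, zero_pow hk₂.ne']
      have h1 : t ^ (k₁ - 1) * (C 0 0 / t ^ (k₁ - 1)) = C 0 0 :=
        mul_div_cancel₀ _ htpne
      have h2 : t ^ (k₁ - 1) * t = C 0 1 := by
        rw [← pow_succ, Nat.sub_add_cancel hk₁, ht]
      ext i j; fin_cases i <;> fin_cases j <;>
        simp [Matrix.add_apply, Matrix.mul_apply, Fin.sum_univ_two, h1, h2, h10, h11]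
end

section
/- Let K be an algebraically closed field, k₁, k₂ positive integers, λ ∈ K nonzero, ξ ∈ K, A = [[λ,1],[0,λ]], and B = [[ξ,z],[0,ξ]] with ξ ≠ 0. Then the map (X,Y) ↦ AX^{k₁} + BY^{k₂} on M(2,K) is surjective. -/
private lemma diagPowAux18 {K : Type*} [Field K] (a d : K) (n : ℕ) :
    (!![a, 0; 0, d] : Matrix (Fin 2) (Fin 2) K) ^ n = !![a ^ n, 0; 0, d ^ n] := by
  induction n with
  | zero => simp [Matrix.one_fin_two]
  | succ n ih =>
    rw [pow_succ, ih, pow_succ, pow_succ]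
    simp [Matrix.mul_fin_two]

private lemma conjPowAux18 {K : Type*} [Field K] (P Q D : Matrix (Fin 2) (Fin 2) K)
    (h1 : P * Q = 1) (h2 : Q * P = 1) (n : ℕ) :
    (P * D * Q) ^ n = P * D ^ n * Q := by
  induction n with
  | zero => simp [h1]
  | succ n ih =>
    rw [pow_succ, ih, pow_succ]
    calc P * D ^ n * Q * (P * D * Q) = P * D ^ n * (Q * P) * D * Q := by
          noncomm_ring
      _ = P * (D ^ n * D) * Q := by rw [h2]; noncomm_ring

theorem stmt18 (K : Type*) [Field K] [IsAlgClosed K] (k₁ k₂ : ℕ)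
    (hk₁ : 0 < k₁) (hk₂ : 0 < k₂) (l ξ z : K) (hl : l ≠ 0) (hξ : ξ ≠ 0) :
    Function.Surjective (fun XY : Matrix (Fin 2) (Fin 2) K × Matrix (Fin 2) (Fin 2) K =>
      !![l, 1; 0, l] * XY.1 ^ k₁ + !![ξ, z; 0, ξ] * XY.2 ^ k₂) := by
  classical
  intro M
  obtain ⟨w, hw⟩ : ∃ w : K, w = M 1 0 / l := ⟨_, rfl⟩
  obtain ⟨κ, hκ⟩ : ∃ κ : K, κ = M 1 1 / ξ := ⟨_, rfl⟩
  obtain ⟨c, hc⟩ : ∃ c : K, c = (M 0 0 - w - M 1 1) / l := ⟨_, rfl⟩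
  obtain ⟨α, hα⟩ := Infinite.exists_notMem_finset ({0, c} : Finset K)
  simp only [Finset.mem_insert, Finset.mem_singleton, not_or] at hα
  obtain ⟨hα0, hαc⟩ := hα
  obtain ⟨π, hπ⟩ : ∃ π : K, π = (M 0 0 - l * α - w) / ξ := ⟨_, rfl⟩
  have hπκ : κ - π ≠ 0 := by
    intro h
    apply hαc
    rw [hκ, hπ] at h
    rw [hc, eq_div_iff hl]
    field_simp at h
    linear_combination h
  obtain ⟨a, ha⟩ := IsAlgClosed.exists_pow_nat_eq α hk₁
  obtain ⟨p, hp⟩ := IsAlgClosed.exists_pow_nat_eq π hk₂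
  obtain ⟨q, hq⟩ := IsAlgClosed.exists_pow_nat_eq κ hk₂
  obtain ⟨u, hu⟩ : ∃ u : K, u = w / α := ⟨_, rfl⟩
  obtain ⟨v, hv⟩ : ∃ v : K, v = (M 0 1 - z * κ) / ξ / (κ - π) := ⟨_, rfl⟩
  have key1 : u * α = w := by rw [hu]; exact div_mul_cancel₀ _ hα0
  have key2 : ξ * (v * (κ - π)) = M 0 1 - z * κ := by
    rw [hv, div_mul_cancel₀ _ hπκ, mul_div_cancel₀ _ hξ]
  have key3 : l * w = M 1 0 := by rw [hw]; exact mul_div_cancel₀ _ hl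
  have key4 : ξ * κ = M 1 1 := by rw [hκ]; exact mul_div_cancel₀ _ hξ
  have key5 : ξ * π = M 0 0 - l * α - w := by rw [hπ]; exact mul_div_cancel₀ _ hξ
  refine ⟨(!![1, 0; u, 1] * !![a, 0; 0, 0] * !![1, 0; -u, 1],
           !![1, v; 0, 1] * !![p, 0; 0, q] * !![1, -v; 0, 1]), ?_⟩
  have h1 : (!![1, 0; u, 1] : Matrix (Fin 2) (Fin 2) K) * !![1, 0; -u, 1] = 1 := by
    simp [Matrix.mul_fin_two, Matrix.one_fin_two]
  have h2 : (!![1, 0; -u, 1] : Matrix (Fin 2) (Fin 2) K) * !![1, 0; u, 1] = 1 := by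
    simp [Matrix.mul_fin_two, Matrix.one_fin_two]
  have h3 : (!![1, v; 0, 1] : Matrix (Fin 2) (Fin 2) K) * !![1, -v; 0, 1] = 1 := by
    simp [Matrix.mul_fin_two, Matrix.one_fin_two]
  have h4 : (!![1, -v; 0, 1] : Matrix (Fin 2) (Fin 2) K) * !![1, v; 0, 1] = 1 := by
    simp [Matrix.mul_fin_two, Matrix.one_fin_two]
  simp only [conjPowAux18 _ _ _ h1 h2, conjPowAux18 _ _ _ h3 h4, diagPowAux18, ha, hp, hq,
    zero_pow hk₁.ne', zero_pow hk₂.ne']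
  ext i j
  fin_cases i <;> fin_cases j <;> simp [Matrix.mul_fin_two]
  · linear_combination key1 + key5
  · linear_combination key2
  · linear_combination l * key1 + key3
  · linear_combination key4
end
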